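/- For any 0 < α ≤ 2, the function d_α(p,q) := √( (ρ(p⁻¹·q)² + ‖p⁻¹·q‖_{g,α}²) / (2α²) ), where ρ(x,y,z)=√(x²+y²) and ‖(x,y,z)‖_{g,α} = ((x²+y²)² + 4α²z²)^{1/4}, defines a homogeneous distance on the Heisenberg group ℍ¹, i.e. it is a metric, left-invariant, and satisfies d_α(δ_λ p, δ_λ q) = λ d_α(p,q). -/

import Mathlib

/-!
Identify the horizontal part of `p = (x, y, z)` with `w = x + iy` and put
`ζ_p = |w|² + 2iαz`. Then `2α² d_α(p, q)² = Re ζ_u + |ζ_u|` with `u = p⁻¹q`, so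
`d_α(p, q) = N(p⁻¹q) / α` for the gauge `N(u) = √((Re ζ_u + |ζ_u|) / 2)`.
Left invariance is built in, `N` is even and `δ_λ`-homogeneous, and the triangle
inequality is subadditivity of `N`. For the latter, `ζ_{pq} = ζ_p + ζ_q + ω` with
`ω = 2 Re(w̄₁w₂) + iα Im(w̄₁w₂)`; since `ζ ↦ (Re ζ + |ζ|)/2` is subadditive and
`|ω| ≤ 2|w₁||w₂| ≤ 2 N(p) N(q)` when `α ≤ 2`, we get `N(pq)² ≤ (N(p) + N(q))²`.
-/

open Real

abbrev H : Type := ℝ × ℝ × ℝ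

noncomputable section

/-- Heisenberg group law on ℝ³. -/
def hmul (p q : H) : H :=
  (p.1 + q.1, p.2.1 + q.2.1, p.2.2 + q.2.2 + (p.1 * q.2.1 - p.2.1 * q.1) / 2)

/-- Heisenberg inverse. -/
def hinv (p : H) : H := (-p.1, -p.2.1, -p.2.2)

/-- Heisenberg dilation. -/
def hdil (l : ℝ) (p : H) : H := (l * p.1, l * p.2.1, l ^ 2 * p.2.2)

/-- Horizontal norm ρ. -/
def rho (p : H) : ℝ := Real.sqrt (p.1 ^ 2 + p.2.1 ^ 2)

/-- The gauge norm ‖·‖_{g,α}. -/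
def gnorm (α : ℝ) (p : H) : ℝ :=
  ((p.1 ^ 2 + p.2.1 ^ 2) ^ 2 + 4 * α ^ 2 * p.2.2 ^ 2) ^ ((1 : ℝ) / 4)

/-- The distance d_α. -/
def dA (α : ℝ) (p q : H) : ℝ :=
  Real.sqrt (((rho (hmul (hinv p) q)) ^ 2 + (gnorm α (hmul (hinv p) q)) ^ 2) / (2 * α ^ 2))

open Complex ComplexConjugate

def halfReAddNorm (ζ : ℂ) : ℝ := (ζ.re + ‖ζ‖) / 2

section halfReAddNorm

variable (ζ ω : ℂ)

lemma halfReAddNorm_nonneg : 0 ≤ halfReAddNorm ζ := by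
  unfold halfReAddNorm
  linarith [neg_abs_le ζ.re, abs_re_le_norm ζ]

lemma re_le_halfReAddNorm : ζ.re ≤ halfReAddNorm ζ := by
  unfold halfReAddNorm
  linarith [re_le_norm ζ]

lemma halfReAddNorm_le_norm : halfReAddNorm ζ ≤ ‖ζ‖ := by
  unfold halfReAddNorm
  linarith [re_le_norm ζ]

lemma norm_le_two_mul_halfReAddNorm {ζ : ℂ} (h : 0 ≤ ζ.re) :
    ‖ζ‖ ≤ 2 * halfReAddNorm ζ := by
  unfold halfReAddNorm
  linarith

lemma halfReAddNorm_add_le : halfReAddNorm (ζ + ω) ≤ halfReAddNorm ζ + halfReAddNorm ω := by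
  unfold halfReAddNorm
  linarith [norm_add_le ζ ω, add_re ζ ω]

lemma halfReAddNorm_conj : halfReAddNorm (conj ζ) = halfReAddNorm ζ := by
  simp only [halfReAddNorm, conj_re, norm_conj]

lemma halfReAddNorm_ofReal_mul {t : ℝ} (ht : 0 ≤ t) :
    halfReAddNorm (t * ζ) = t * halfReAddNorm ζ := by
  simp only [halfReAddNorm, re_ofReal_mul, norm_mul, norm_real, Real.norm_of_nonneg ht]
  ring

end halfReAddNorm

lemma norm_mk_mul_re_mul_im_le {s t : ℝ} (hts : |t| ≤ s) (ζ : ℂ) :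
    ‖(⟨s * ζ.re, t * ζ.im⟩ : ℂ)‖ ≤ s * ‖ζ‖ := by
  have hs : 0 ≤ s := (abs_nonneg t).trans hts
  have hts2 : t ^ 2 ≤ s ^ 2 := sq_le_sq.mpr (by rwa [abs_of_nonneg hs])
  rw [← sq_le_sq₀ (norm_nonneg _) (by positivity), mul_pow, Complex.sq_norm, Complex.sq_norm,
    normSq_mk, normSq_apply]
  nlinarith [mul_le_mul_of_nonneg_right hts2 (sq_nonneg ζ.im)]

section Heisenberg

variable (α : ℝ) (p q r g : H)

lemma hinv_hmul_hinv : hinv (hmul (hinv p) q) = hmul (hinv q) p := by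
  ext <;> simp only [hmul, hinv] <;> ring

lemma hmul_hinv_hmul_hinv : hmul (hmul (hinv p) q) (hmul (hinv q) r) = hmul (hinv p) r := by
  ext <;> simp only [hmul, hinv] <;> ring

lemma hinv_hmul_hmul_left : hmul (hinv (hmul g p)) (hmul g q) = hmul (hinv p) q := by
  ext <;> simp only [hmul, hinv] <;> ring

lemma hdil_hmul_hinv (l : ℝ) : hdil l (hmul (hinv p) q) = hmul (hinv (hdil l p)) (hdil l q) := by
  ext <;> simp only [hmul, hinv, hdil] <;> ring

lemma hmul_hinv_eq_zero_iff : hmul (hinv p) q = 0 ↔ p = q := by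
  obtain ⟨x, y, z⟩ := p
  obtain ⟨x', y', z'⟩ := q
  simp only [hmul, hinv, Prod.ext_iff, Prod.fst_zero, Prod.snd_zero]
  constructor
  · rintro ⟨hx, hy, hz⟩
    have hx' : x' = x := by linarith
    have hy' : y' = y := by linarith
    subst hx' hy'
    exact ⟨rfl, rfl, by linarith⟩
  · rintro ⟨rfl, rfl, rfl⟩
    exact ⟨by ring, by ring, by ring⟩

def horiz (p : H) : ℂ := ⟨p.1, p.2.1⟩

def gaugeVec (α : ℝ) (p : H) : ℂ := ⟨p.1 ^ 2 + p.2.1 ^ 2, 2 * α * p.2.2⟩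

lemma re_gaugeVec : (gaugeVec α p).re = ‖horiz p‖ ^ 2 := by
  rw [Complex.sq_norm, horiz, normSq_mk, gaugeVec]
  ring

lemma gaugeVec_hmul :
    gaugeVec α (hmul p q) = gaugeVec α p + gaugeVec α q +
      ⟨2 * (conj (horiz p) * horiz q).re, α * (conj (horiz p) * horiz q).im⟩ := by
  apply Complex.ext <;>
    simp only [gaugeVec, hmul, horiz, add_re, add_im, mul_re, mul_im, conj_re, conj_im] <;> ring

lemma gaugeVec_hinv : gaugeVec α (hinv p) = conj (gaugeVec α p) := by
  apply Complex.ext <;> simp only [gaugeVec, hinv, conj_re, conj_im] <;> ring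

lemma gaugeVec_hdil (l : ℝ) : gaugeVec α (hdil l p) = ((l ^ 2 : ℝ) : ℂ) * gaugeVec α p := by
  apply Complex.ext <;>
    simp only [gaugeVec, hdil, re_ofReal_mul, im_ofReal_mul] <;> ring

lemma gaugeVec_eq_zero_iff {α : ℝ} (hα : α ≠ 0) : gaugeVec α p = 0 ↔ p = 0 := by
  obtain ⟨x, y, z⟩ := p
  simp only [gaugeVec, Complex.ext_iff, zero_re, zero_im, Prod.ext_iff, Prod.fst_zero,
    Prod.snd_zero, mul_eq_zero, hα, OfNat.ofNat_ne_zero, false_or]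
  constructor
  · rintro ⟨hxy, hz⟩
    exact ⟨by nlinarith [sq_nonneg x, sq_nonneg y], by nlinarith [sq_nonneg x, sq_nonneg y], hz⟩
  · rintro ⟨rfl, rfl, rfl⟩
    norm_num

def homNorm (α : ℝ) (p : H) : ℝ := √(halfReAddNorm (gaugeVec α p))

lemma homNorm_sq : homNorm α p ^ 2 = halfReAddNorm (gaugeVec α p) :=
  Real.sq_sqrt (halfReAddNorm_nonneg _)

lemma rho_sq_add_gnorm_sq : rho p ^ 2 + gnorm α p ^ 2 = 2 * halfReAddNorm (gaugeVec α p) := by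
  have hA : 0 ≤ p.1 ^ 2 + p.2.1 ^ 2 := by positivity
  have hgnorm : gnorm α p ^ 2 = ‖gaugeVec α p‖ := by
    rw [gnorm, ← Real.rpow_natCast, ← Real.rpow_mul (by positivity), norm_def, normSq_mk,
      Real.sqrt_eq_rpow, gaugeVec]
    norm_num
    ring_nf
  rw [rho, Real.sq_sqrt hA, hgnorm, halfReAddNorm, gaugeVec]
  ring

lemma dA_eq_homNorm_div {α : ℝ} (hα : 0 < α) (p q : H) :
    dA α p q = homNorm α (hmul (hinv p) q) / α := by
  rw [dA, rho_sq_add_gnorm_sq, mul_div_mul_left _ _ two_ne_zero,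
    Real.sqrt_div (halfReAddNorm_nonneg _), Real.sqrt_sq hα.le, homNorm]

lemma norm_horiz_le_homNorm : ‖horiz p‖ ≤ homNorm α p :=
  (Real.le_sqrt (norm_nonneg _) (halfReAddNorm_nonneg _)).mpr
    (re_gaugeVec α p ▸ re_le_halfReAddNorm _)

lemma homNorm_hmul_le {α : ℝ} (hα : |α| ≤ 2) (p q : H) :
    homNorm α (hmul p q) ≤ homNorm α p + homNorm α q := by
  set ω : ℂ := ⟨2 * (conj (horiz p) * horiz q).re, α * (conj (horiz p) * horiz q).im⟩
  have hω : ‖ω‖ ≤ 2 * (homNorm α p * homNorm α q) :=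
    calc ‖ω‖ ≤ 2 * ‖conj (horiz p) * horiz q‖ := norm_mk_mul_re_mul_im_le hα _
      _ = 2 * (‖horiz p‖ * ‖horiz q‖) := by rw [norm_mul, norm_conj]
      _ ≤ 2 * (homNorm α p * homNorm α q) := by
        gcongr
        · exact (norm_nonneg _).trans (norm_horiz_le_homNorm α p)
        · exact norm_horiz_le_homNorm α p
        · exact norm_horiz_le_homNorm α q
  refine Real.sqrt_le_iff.mpr ⟨add_nonneg (Real.sqrt_nonneg _) (Real.sqrt_nonneg _), ?_⟩
  calc halfReAddNorm (gaugeVec α (hmul p q))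
      ≤ halfReAddNorm (gaugeVec α p) + halfReAddNorm (gaugeVec α q) + halfReAddNorm ω := by
        rw [gaugeVec_hmul]
        linarith [halfReAddNorm_add_le (gaugeVec α p + gaugeVec α q) ω,
          halfReAddNorm_add_le (gaugeVec α p) (gaugeVec α q)]
    _ ≤ homNorm α p ^ 2 + homNorm α q ^ 2 + ‖ω‖ := by
        rw [homNorm_sq, homNorm_sq]
        linarith [halfReAddNorm_le_norm ω]
    _ ≤ (homNorm α p + homNorm α q) ^ 2 := by nlinarith

lemma homNorm_hinv : homNorm α (hinv p) = homNorm α p := by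
  rw [homNorm, gaugeVec_hinv, halfReAddNorm_conj, homNorm]

lemma homNorm_hdil {l : ℝ} (hl : 0 ≤ l) : homNorm α (hdil l p) = l * homNorm α p := by
  rw [homNorm, gaugeVec_hdil, halfReAddNorm_ofReal_mul _ (sq_nonneg l),
    Real.sqrt_mul (sq_nonneg l), Real.sqrt_sq hl, homNorm]

lemma homNorm_eq_zero_iff {α : ℝ} (hα : α ≠ 0) : homNorm α p = 0 ↔ p = 0 := by
  rw [homNorm, Real.sqrt_eq_zero (halfReAddNorm_nonneg _), ← gaugeVec_eq_zero_iff p hα,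
    ← norm_eq_zero (a := gaugeVec α p)]
  have hre : 0 ≤ (gaugeVec α p).re := re_gaugeVec α p ▸ sq_nonneg _
  constructor
  · intro h
    linarith [norm_le_two_mul_halfReAddNorm hre, norm_nonneg (gaugeVec α p)]
  · intro h
    linarith [halfReAddNorm_le_norm (gaugeVec α p), halfReAddNorm_nonneg (gaugeVec α p)]

end Heisenberg

theorem stmt3 (α : ℝ) (hα : 0 < α) (hα2 : α ≤ 2) :
    (∀ p q : H, dA α p q = 0 ↔ p = q) ∧
    (∀ p q : H, dA α p q = dA α q p) ∧
    (∀ p q r : H, dA α p r ≤ dA α p q + dA α q r) ∧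
    (∀ g p q : H, dA α (hmul g p) (hmul g q) = dA α p q) ∧
    (∀ l : ℝ, 0 < l → ∀ p q : H, dA α (hdil l p) (hdil l q) = l * dA α p q) := by
  simp only [dA_eq_homNorm_div hα]
  refine ⟨fun p q => ?_, fun p q => ?_, fun p q r => ?_, fun g p q => ?_, fun l hl p q => ?_⟩
  · rw [div_eq_zero_iff, homNorm_eq_zero_iff _ hα.ne', hmul_hinv_eq_zero_iff, or_iff_left hα.ne']
  · rw [← hinv_hmul_hinv, homNorm_hinv]
  · rw [← hmul_hinv_hmul_hinv p q r, ← add_div]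
    gcongr
    exact homNorm_hmul_le (abs_le.mpr ⟨by linarith, hα2⟩) _ _
  · rw [hinv_hmul_hmul_left]
  · rw [← hdil_hmul_hinv, homNorm_hdil _ _ hl.le, mul_div_assoc]
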